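/- Let d ∈ ℕ and let n⁻', n⁻, n⁺', n⁺, n⁰ ∈ ℕ^p satisfy n⁻' ≤ n⁻ and n⁺' ≤ n⁺ componentwise. Then k_d(n⁻', n⁰, n⁺') ≤ k_d(n⁻, n⁰, n⁺): the BART sub-correlation function is monotonically non-decreasing in the exterior split counts. -/

import Mathlib

/-- Total weight `W(v) = Σ_{i : v_i ≠ 0} w_i` of the axes with at least one available split. -/
noncomputable def bartW (p : ℕ) (w : Fin p → ℝ) (v : Fin p → ℕ) : ℝ :=
  ∑ i ∈ Finset.univ.filter (fun i => v i ≠ 0), w i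

/-- The BART sub-correlation function `k_d(n⁻, n⁰, n⁺)`, defined by well-founded recursion
on `Σ_i (n⁻_i + n⁺_i)`. -/
noncomputable def bartK (p : ℕ) (w : Fin p → ℝ) (P : ℕ → ℝ)
    (d : ℕ) (nm n0 np : Fin p → ℕ) : ℝ :=
  if ∀ i, nm i + n0 i + np i = 0 then 1
  else
    1 - P d * (1 - (1 / bartW p w (fun i => nm i + n0 i + np i)) *
      ∑ i ∈ Finset.univ.filter (fun i => nm i + n0 i + np i ≠ 0),
        (w i / ((nm i + n0 i + np i : ℕ) : ℝ)) *
          ((∑ k ∈ (Finset.range (nm i)).attach,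
              bartK p w P (d+1) (Function.update nm i k.1) n0 np) +
           (∑ k ∈ (Finset.range (np i)).attach,
              bartK p w P (d+1) nm n0 (Function.update np i k.1))))
termination_by ∑ i, (nm i + np i)
decreasing_by
  · have hk : k.1 < nm i := Finset.mem_range.mp k.2
    refine Finset.sum_lt_sum (fun j _ => ?_) ⟨i, Finset.mem_univ i, ?_⟩
    · rcases eq_or_ne j i with rfl | hj
      · simp only [Function.update_self]; omega
      · simp only [Function.update_of_ne hj]; omega
    · simp only [Function.update_self]; omega
  · have hk : k.1 < np i := Finset.mem_range.mp k.2
    refine Finset.sum_lt_sum (fun j _ => ?_) ⟨i, Finset.mem_univ i, ?_⟩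
    · rcases eq_or_ne j i with rfl | hj
      · simp only [Function.update_self]; omega
      · simp only [Function.update_of_ne hj]; omega
    · simp only [Function.update_self]; omega

/-!
Write `k_d = 1 - P_d (1 - M_d)`, where `M_d` is the `w`-weighted mean, over the active axes, of
the average correlation `k_{d+1}` of the children along each axis. By well-founded induction on
`(n⁻, n⁺)` it suffices to show that raising a single `n⁻_i` by one raises `M_d`; the case of `n⁺`
follows from the symmetry `n⁻ ↔ n⁺`. Along every axis `j ≠ i` the children only grow. Along `i`
the configuration `n` itself becomes a new child, and since `k_{d+1}(n) ≥ 0` dominates every child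
of `n`, adding it does not lower the average. If axis `i` was inactive, it enters the mean with
value exactly `k_{d+1}(n)`, which again dominates every old average.
-/

open Finset Function

theorem le_sum_mul_div_sum {ι : Type*} {s : Finset ι} {w b : ι → ℝ} {c : ℝ}
    (hw : ∀ j ∈ s, 0 ≤ w j) (hs : 0 < ∑ j ∈ s, w j) (hcb : ∀ j ∈ s, c ≤ b j) :
    c ≤ (∑ j ∈ s, w j * b j) / ∑ j ∈ s, w j := by
  rw [le_div_iff₀ hs, mul_sum]
  exact sum_le_sum fun j hj => by
    rw [mul_comm]; exact mul_le_mul_of_nonneg_left (hcb j hj) (hw j hj)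

theorem sum_mul_div_sum_le_of_subset {ι : Type*} [DecidableEq ι] {s t : Finset ι}
    {w a b : ι → ℝ} {c : ℝ} (hst : s ⊆ t) (hw : ∀ j ∈ t, 0 ≤ w j) (hs : 0 < ∑ j ∈ s, w j)
    (hab : ∀ j ∈ s, a j ≤ b j) (hac : ∀ j ∈ s, a j ≤ c) (hcb : ∀ j ∈ t \ s, c ≤ b j) :
    (∑ j ∈ s, w j * a j) / ∑ j ∈ s, w j ≤ (∑ j ∈ t, w j * b j) / ∑ j ∈ t, w j := by
  have hA : ∑ j ∈ s, w j * a j ≤ c * ∑ j ∈ s, w j := by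
    rw [mul_sum]
    exact sum_le_sum fun j hj => by
      rw [mul_comm c]; exact mul_le_mul_of_nonneg_left (hac j hj) (hw j (hst hj))
  have hAB : ∑ j ∈ s, w j * a j ≤ ∑ j ∈ s, w j * b j :=
    sum_le_sum fun j hj => mul_le_mul_of_nonneg_left (hab j hj) (hw j (hst hj))
  have hD : c * ∑ j ∈ t \ s, w j ≤ ∑ j ∈ t \ s, w j * b j := by
    rw [mul_sum]
    exact sum_le_sum fun j hj => by
      rw [mul_comm c]; exact mul_le_mul_of_nonneg_left (hcb j hj) (hw j (sdiff_subset hj))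
  have hD0 : 0 ≤ ∑ j ∈ t \ s, w j := sum_nonneg fun j hj => hw j (sdiff_subset hj)
  rw [← sum_sdiff hst, ← sum_sdiff hst (f := w), div_le_div_iff₀ hs (by linarith)]
  nlinarith [mul_le_mul_of_nonneg_right hA hD0, mul_le_mul_of_nonneg_left hD hs.le,
    mul_le_mul_of_nonneg_left hAB (add_nonneg hD0 hs.le)]

theorem div_le_div_add_one_of_le {a b c n : ℝ} (hn : 0 < n) (ha : a ≤ n * c) (hb : a + c ≤ b) :
    a / n ≤ b / (n + 1) := by
  rw [div_le_div_iff₀ hn (by linarith)]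
  nlinarith [mul_le_mul_of_nonneg_right hb hn.le]

section BartK

variable {p : ℕ} {w : Fin p → ℝ} {P : ℕ → ℝ}

noncomputable def bartChildSum (p : ℕ) (w : Fin p → ℝ) (P : ℕ → ℝ) (d : ℕ)
    (nm n0 np : Fin p → ℕ) (i : Fin p) : ℝ :=
  ∑ k ∈ range (nm i), bartK p w P (d + 1) (update nm i k) n0 np +
    ∑ k ∈ range (np i), bartK p w P (d + 1) nm n0 (update np i k)

-- The average runs over all `n_i` split points of axis `i`; the `n⁰_i` interior ones add `0`.
noncomputable def bartChildMean (p : ℕ) (w : Fin p → ℝ) (P : ℕ → ℝ) (d : ℕ)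
    (nm n0 np : Fin p → ℕ) (i : Fin p) : ℝ :=
  bartChildSum p w P d nm n0 np i / (nm i + n0 i + np i : ℕ)

noncomputable def bartMean (p : ℕ) (w : Fin p → ℝ) (P : ℕ → ℝ) (d : ℕ)
    (nm n0 np : Fin p → ℕ) : ℝ :=
  (∑ i ∈ univ.filter (fun i => nm i + n0 i + np i ≠ 0), w i * bartChildMean p w P d nm n0 np i) /
    bartW p w (fun i => nm i + n0 i + np i)

theorem bartK_of_forall_eq_zero {d : ℕ} {nm n0 np : Fin p → ℕ}
    (h : ∀ i, nm i + n0 i + np i = 0) : bartK p w P d nm n0 np = 1 := by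
  rw [bartK, if_pos h]

theorem bartK_eq_bartMean {d : ℕ} {nm n0 np : Fin p → ℕ} (h : ¬ ∀ i, nm i + n0 i + np i = 0) :
    bartK p w P d nm n0 np = 1 - P d * (1 - bartMean p w P d nm n0 np) := by
  have hchild : ∀ i, ∑ k ∈ (range (nm i)).attach, bartK p w P (d + 1) (update nm i k) n0 np +
      ∑ k ∈ (range (np i)).attach, bartK p w P (d + 1) nm n0 (update np i k) =
      bartChildSum p w P d nm n0 np i := fun i => by
    rw [sum_attach _ (fun k => bartK p w P (d + 1) (update nm i k) n0 np),
      sum_attach _ (fun k => bartK p w P (d + 1) nm n0 (update np i k)), bartChildSum]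
  rw [bartK, if_neg h, bartMean, one_div_mul_eq_div]
  simp only [hchild, div_mul_eq_mul_div, mul_div_assoc, bartChildMean]

theorem bartW_pos (hw : ∀ i, 0 < w i) {v : Fin p → ℕ} (hv : ¬ ∀ i, v i = 0) :
    0 < bartW p w v := by
  obtain ⟨i, hi⟩ := not_forall.1 hv
  exact sum_pos (fun j _ => hw j) ⟨i, mem_filter.2 ⟨mem_univ i, hi⟩⟩

theorem bartK_nonneg (hw : ∀ i, 0 ≤ w i) (hP : ∀ d, P d ∈ Set.Icc (0 : ℝ) 1)
    (d : ℕ) (nm n0 np : Fin p → ℕ) : 0 ≤ bartK p w P d nm n0 np := by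
  induction d, nm, np using bartK.induct p n0 with
  | case1 d nm np h => rw [bartK_of_forall_eq_zero h]; exact zero_le_one
  | case2 d nm np h ihm ihp =>
    have hmean : 0 ≤ bartMean p w P d nm n0 np := by
      refine div_nonneg (sum_nonneg fun i _ => mul_nonneg (hw i) (div_nonneg ?_ (Nat.cast_nonneg _)))
        (sum_nonneg fun i _ => hw i)
      exact add_nonneg (sum_nonneg fun k hk => ihm i ⟨k, hk⟩) (sum_nonneg fun k hk => ihp i ⟨k, hk⟩)
    rw [bartK_eq_bartMean h]
    nlinarith [(hP d).1, (hP d).2]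

theorem bartK_swap (d : ℕ) (nm n0 np : Fin p → ℕ) :
    bartK p w P d nm n0 np = bartK p w P d np n0 nm := by
  induction d, nm, np using bartK.induct p n0 with
  | case1 d nm np h =>
    rw [bartK_of_forall_eq_zero h, bartK_of_forall_eq_zero fun i => by have := h i; omega]
  | case2 d nm np h ihm ihp =>
    have hn : ∀ i, np i + n0 i + nm i = nm i + n0 i + np i := fun i => by omega
    have h' : ¬ ∀ i, np i + n0 i + nm i = 0 := by simpa only [hn] using h
    have hchild : ∀ i, bartChildSum p w P d np n0 nm i = bartChildSum p w P d nm n0 np i := by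
      intro i
      rw [bartChildSum, bartChildSum, add_comm]
      congr 1 <;> refine sum_congr rfl fun k hk => ?_
      · exact (ihm i ⟨k, hk⟩).symm
      · exact (ihp i ⟨k, hk⟩).symm
    rw [bartK_eq_bartMean h, bartK_eq_bartMean h']
    simp only [bartMean, bartChildMean, hn, hchild]

def BartKMonotoneAt (p : ℕ) (w : Fin p → ℝ) (P : ℕ → ℝ) (nm n0 np : Fin p → ℕ) : Prop :=
  ∀ d nm' np', nm' ≤ nm → np' ≤ np → bartK p w P d nm' n0 np' ≤ bartK p w P d nm n0 np

theorem BartKMonotoneAt.swap {nm n0 np : Fin p → ℕ} (h : BartKMonotoneAt p w P nm n0 np) :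
    BartKMonotoneAt p w P np n0 nm := fun d a' b' ha hb => by
  rw [bartK_swap, bartK_swap (nm := np)]
  exact h d b' a' hb ha

variable {d : ℕ} {nm n0 np : Fin p → ℕ}

theorem bartChildSum_le (hw : ∀ i, 0 ≤ w i) (hP : ∀ d, P d ∈ Set.Icc (0 : ℝ) 1)
    (hmono : BartKMonotoneAt p w P nm n0 np) (j : Fin p) :
    bartChildSum p w P d nm n0 np j ≤
      ((nm j + n0 j + np j : ℕ) : ℝ) * bartK p w P (d + 1) nm n0 np := by
  have hK := bartK_nonneg hw hP (d + 1) nm n0 np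
  have hm : ∑ k ∈ range (nm j), bartK p w P (d + 1) (update nm j k) n0 np ≤
      nm j * bartK p w P (d + 1) nm n0 np := by
    simpa using sum_le_sum fun k hk =>
      hmono (d + 1) _ _ (update_le_self_iff.2 (mem_range.1 hk).le) le_rfl
  have hp : ∑ k ∈ range (np j), bartK p w P (d + 1) nm n0 (update np j k) ≤
      np j * bartK p w P (d + 1) nm n0 np := by
    simpa using sum_le_sum fun k hk =>
      hmono (d + 1) _ _ le_rfl (update_le_self_iff.2 (mem_range.1 hk).le)
  calc bartChildSum p w P d nm n0 np j ≤ (nm j + np j) * bartK p w P (d + 1) nm n0 np := by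
        rw [bartChildSum, add_mul]; exact add_le_add hm hp
    _ ≤ _ := by gcongr; push_cast; linarith [(n0 j).cast_nonneg (α := ℝ)]

theorem bartChildSum_le_bartChildSum (ih : ∀ y < (nm, np), BartKMonotoneAt p w P y.1 n0 y.2)
    {x : Fin p → ℕ} (hx : x ≤ nm) {j : Fin p} (hj : x j = nm j) :
    bartChildSum p w P d x n0 np j ≤ bartChildSum p w P d nm n0 np j := by
  rw [bartChildSum, bartChildSum, hj]
  gcongr with k hk k hk
  · exact ih _ (Prod.mk_lt_mk_of_lt_of_le (update_lt_self_iff.2 (mem_range.1 hk)) le_rfl)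
      (d + 1) _ _ (update_le_update_iff.2 ⟨le_rfl, fun l _ => hx l⟩) le_rfl
  · exact ih _ (Prod.mk_lt_mk_of_le_of_lt le_rfl (update_lt_self_iff.2 (mem_range.1 hk)))
      (d + 1) _ _ hx le_rfl

theorem bartChildSum_update_add_le (ih : ∀ y < (nm, np), BartKMonotoneAt p w P y.1 n0 y.2)
    {i : Fin p} {k : ℕ} (hk : k + 1 = nm i) :
    bartChildSum p w P d (update nm i k) n0 np i + bartK p w P (d + 1) (update nm i k) n0 np ≤
      bartChildSum p w P d nm n0 np i := by
  have hp : ∑ k' ∈ range (np i), bartK p w P (d + 1) (update nm i k) n0 (update np i k') ≤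
      ∑ k' ∈ range (np i), bartK p w P (d + 1) nm n0 (update np i k') :=
    sum_le_sum fun k' hk' => ih _ (Prod.mk_lt_mk_of_le_of_lt le_rfl
      (update_lt_self_iff.2 (mem_range.1 hk'))) (d + 1) _ _ (update_le_self_iff.2 (by omega)) le_rfl
  rw [bartChildSum, bartChildSum, update_self, ← hk, sum_range_succ]
  simp only [update_idem]
  linarith

theorem bartChildMean_update_le (hw : ∀ i, 0 ≤ w i) (hP : ∀ d, P d ∈ Set.Icc (0 : ℝ) 1)
    (ih : ∀ y < (nm, np), BartKMonotoneAt p w P y.1 n0 y.2) {i : Fin p} {k : ℕ}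
    (hk : k + 1 = nm i) {j : Fin p} (hj : update nm i k j + n0 j + np j ≠ 0) :
    bartChildMean p w P d (update nm i k) n0 np j ≤ bartChildMean p w P d nm n0 np j := by
  rcases eq_or_ne j i with rfl | hji
  · have hlt : (update nm j k, np) < (nm, np) :=
      Prod.mk_lt_mk_of_lt_of_le (update_lt_self_iff.2 (by omega)) le_rfl
    have hn : ((nm j + n0 j + np j : ℕ) : ℝ) = ((update nm j k j + n0 j + np j : ℕ) : ℝ) + 1 := by
      rw [update_self, ← hk]; push_cast; ring
    rw [bartChildMean, bartChildMean, hn]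
    exact div_le_div_add_one_of_le (by positivity) (bartChildSum_le hw hP (ih _ hlt) j)
      (bartChildSum_update_add_le ih hk)
  · rw [bartChildMean, bartChildMean, update_of_ne hji]
    gcongr
    exact bartChildSum_le_bartChildSum ih (update_le_self_iff.2 (by omega)) (update_of_ne hji _ _)

theorem le_bartChildMean_of_update_eq_zero
    (ih : ∀ y < (nm, np), BartKMonotoneAt p w P y.1 n0 y.2) {i : Fin p} {k : ℕ}
    (hk : k + 1 = nm i) {j : Fin p} (hj : nm j + n0 j + np j ≠ 0)
    (hj' : update nm i k j + n0 j + np j = 0) :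
    bartK p w P (d + 1) (update nm i k) n0 np ≤ bartChildMean p w P d nm n0 np j := by
  obtain rfl : j = i := by
    by_contra hji
    exact hj (by rwa [update_of_ne hji] at hj')
  rw [update_self] at hj'
  have hsum := bartChildSum_update_add_le ih hk (d := d)
  have hzero : bartChildSum p w P d (update nm j k) n0 np j = 0 := by
    simp [bartChildSum, show k = 0 by omega, show np j = 0 by omega]
  rw [bartChildMean, show nm j + n0 j + np j = 1 by omega, Nat.cast_one, div_one]
  linarith

theorem bartK_update_left_le (hw : ∀ i, 0 < w i) (hP : ∀ d, P d ∈ Set.Icc (0 : ℝ) 1)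
    (ih : ∀ y < (nm, np), BartKMonotoneAt p w P y.1 n0 y.2) {i : Fin p} {k : ℕ}
    (hk : k + 1 = nm i) :
    bartK p w P d (update nm i k) n0 np ≤ bartK p w P d nm n0 np := by
  set x := update nm i k
  have hw0 : ∀ i, 0 ≤ w i := fun i => (hw i).le
  have hnm : ¬ ∀ j, nm j + n0 j + np j = 0 := fun h => by have := h i; omega
  have hnew : ∀ j ∈ univ.filter (fun j => nm j + n0 j + np j ≠ 0) \
      univ.filter (fun j => x j + n0 j + np j ≠ 0),
      bartK p w P (d + 1) x n0 np ≤ bartChildMean p w P d nm n0 np j := fun j hj => by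
    simp only [mem_sdiff, mem_filter, mem_univ, true_and, not_not] at hj
    exact le_bartChildMean_of_update_eq_zero ih hk hj.1 hj.2
  rw [bartK_eq_bartMean hnm]
  by_cases hx : ∀ j, x j + n0 j + np j = 0
  · have hmean : 1 ≤ bartMean p w P d nm n0 np := by
      rw [← bartK_of_forall_eq_zero (p := p) (w := w) (P := P) (d := d + 1) hx]
      refine le_sum_mul_div_sum (fun j _ => hw0 j) (bartW_pos hw hnm) fun j hj => hnew j ?_
      simpa [hx] using hj
    rw [bartK_of_forall_eq_zero hx]
    nlinarith [(hP d).1]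
  · have hmean : bartMean p w P d x n0 np ≤ bartMean p w P d nm n0 np := by
      refine sum_mul_div_sum_le_of_subset (fun j => ?_) (fun j _ => hw0 j) (bartW_pos hw hx)
        (fun j hj => bartChildMean_update_le hw0 hP ih hk (mem_filter.1 hj).2)
        (fun j hj => ?_) hnew
      · have : x j ≤ nm j := update_le_self_iff.2 (by omega) j
        simp only [mem_filter, mem_univ, true_and]
        omega
      · have hn : (0 : ℝ) < ((x j + n0 j + np j : ℕ) : ℝ) := by
          exact_mod_cast Nat.pos_of_ne_zero (mem_filter.1 hj).2
        rw [bartChildMean, div_le_iff₀ hn, mul_comm]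
        exact bartChildSum_le hw0 hP
          (ih _ (Prod.mk_lt_mk_of_lt_of_le (update_lt_self_iff.2 (by omega)) le_rfl)) j
    rw [bartK_eq_bartMean hx]
    have := (hP d).1
    gcongr

theorem bartK_update_right_le (hw : ∀ i, 0 < w i) (hP : ∀ d, P d ∈ Set.Icc (0 : ℝ) 1)
    (ih : ∀ y < (nm, np), BartKMonotoneAt p w P y.1 n0 y.2) {i : Fin p} {k : ℕ}
    (hk : k + 1 = np i) :
    bartK p w P d nm n0 (update np i k) ≤ bartK p w P d nm n0 np := by
  rw [bartK_swap, bartK_swap (nm := nm)]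
  exact bartK_update_left_le hw hP (fun y hy => (ih y.swap (Prod.swap_lt_swap.2 hy)).swap) hk

end BartK

theorem bartK_mono_exterior_general
    (p : ℕ) (w : Fin p → ℝ) (hw : ∀ i, 0 < w i)
    (P : ℕ → ℝ) (hP : ∀ d, P d ∈ Set.Icc (0 : ℝ) 1)
    (d : ℕ) (nm' nm n0 np' np : Fin p → ℕ)
    (hm : ∀ i, nm' i ≤ nm i) (hpl : ∀ i, np' i ≤ np i) :
    bartK p w P d nm' n0 np' ≤ bartK p w P d nm n0 np := by
  suffices h : ∀ y : (Fin p → ℕ) × (Fin p → ℕ), BartKMonotoneAt p w P y.1 n0 y.2 from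
    h (nm, np) d nm' np' hm hpl
  intro y
  induction y using WellFoundedLT.induction with
  | _ y ih =>
    obtain ⟨nm, np⟩ := y
    intro d nm' np' hm hp
    by_cases heq : nm' = nm ∧ np' = np
    · rw [heq.1, heq.2]
    obtain ⟨i, hi⟩ : ∃ i, nm' i < nm i ∨ np' i < np i := by
      by_contra! h
      exact heq ⟨le_antisymm hm fun i => (h i).1, le_antisymm hp fun i => (h i).2⟩
    rcases hi with hi | hi
    · calc bartK p w P d nm' n0 np' ≤ bartK p w P d (update nm i (nm i - 1)) n0 np :=
            ih _ (Prod.mk_lt_mk_of_lt_of_le (update_lt_self_iff.2 (by omega)) le_rfl) d _ _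
              (le_update_iff.2 ⟨by omega, fun j _ => hm j⟩) hp
        _ ≤ bartK p w P d nm n0 np := bartK_update_left_le hw hP ih (by omega)
    · calc bartK p w P d nm' n0 np' ≤ bartK p w P d nm n0 (update np i (np i - 1)) :=
            ih _ (Prod.mk_lt_mk_of_le_of_lt le_rfl (update_lt_self_iff.2 (by omega))) d _ _ hm
              (le_update_iff.2 ⟨by omega, fun j _ => hp j⟩)
        _ ≤ bartK p w P d nm n0 np := bartK_update_right_le hw hP ih (by omega)

/-- Property 6 of Theorem 2: `k_d` is monotonically non-decreasing in the exterior
split counts `n⁻` and `n⁺`. -/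
theorem bartK_mono_exterior
    (p : ℕ) (hp : 1 ≤ p) (w : Fin p → ℝ) (hw : ∀ i, 0 < w i)
    (P : ℕ → ℝ) (hP : ∀ d, P d ∈ Set.Icc (0 : ℝ) 1)
    (d : ℕ) (nm' nm n0 np' np : Fin p → ℕ)
    (hm : ∀ i, nm' i ≤ nm i) (hpl : ∀ i, np' i ≤ np i) :
    bartK p w P d nm' n0 np' ≤ bartK p w P d nm n0 np :=
  bartK_mono_exterior_general p w hw P hP d nm' nm n0 np' np hm hpl
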